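/- Under the hypotheses of the previous statement, suppose additionally |X| < m/(36·log m) with m ≥ 2, and let C, C̃, U be unitary operators on (ℂ^X)^{⊗m} such that C and C̃ agree on the subspace spanned by basis vectors indexed by tuples in Υ_β(m,X), and U·C maps the span H of {|ψ^b⟩} into itself, with the initial state |Φ_0⟩ (uniform superposition over X^m) lying in H. Then for all k ≥ 0, ‖(U·C)^k|Φ_0⟩ − (U·C̃)^k|Φ_0⟩‖ ≤ 2k·√|X|·exp(−m/(9|X|)) ≤ 2k/m^3. -/

import Mathlib

/-!
The squared moduli of the coordinates of `|ψ^b⟩` form a product of uniform distributions, and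
distinct `b` have disjoint supports, so for `φ ∈ H` the mass of `φ` outside `Υ_β` is a convex
combination of the same masses for the `|ψ^b⟩`. A tuple in the support of `|ψ^b⟩` but outside
`Υ_β` repeats some value more than `β/2` times at positions with `bᵢ = 0`, because its
coordinates with `bᵢ = 1` extend to a tuple of `A¹₁ × ⋯ × A¹ₘ ⊆ Υ_{β/2}`. There each coordinate hits a given value
with probability at most `2/|X|`, so a Chernoff bound makes the mass outside `Υ_β` at most
`|X| exp(-2m/(9|X|))`. Since `C` and `C̃` agree away from that part, one step of the two walks
deviates by at most `2√|X| exp(-m/(9|X|))` on unit vectors of `H`, and the hybrid argument adds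
these deviations over `k` steps.
-/

open scoped BigOperators Classical

/-- `Aset A1 true = A1` (the set `A¹`) and `Aset A1 false = A1ᶜ` (the set `A⁰`). -/
def Aset {X : Type*} [Fintype X] [DecidableEq X] (A1 : Finset X) : Bool → Finset X
  | true => A1
  | false => A1ᶜ

/-- The state `|ψ^b⟩ = ⊗ᵢ |ψᵢ^{bᵢ}⟩`, written in coordinates. -/
noncomputable def psiState {X : Type*} [Fintype X] [DecidableEq X] {m : ℕ}
    (A1 : Fin m → Finset X) (b : Fin m → Bool) : EuclideanSpace ℂ (Fin m → X) :=
  WithLp.toLp 2 (fun x => ∏ i, if x i ∈ Aset (A1 i) (b i)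
    then (((Real.sqrt ((Aset (A1 i) (b i)).card))⁻¹ : ℝ) : ℂ) else 0)

/-- `Υ_γ(m, X)`: tuples in `X^m` in which every element of `X` appears at most `γ` times. -/
def Upsilon (m : ℕ) (X : Type*) [Fintype X] [DecidableEq X] (γ : ℝ) : Set (Fin m → X) :=
  {x | ∀ a : X, ((Finset.univ.filter fun i => x i = a).card : ℝ) ≤ γ}

/-- The uniform superposition `|Φ₀⟩` over all of `X^m`. -/
noncomputable def Phi0 (X : Type*) [Fintype X] (m : ℕ) : EuclideanSpace ℂ (Fin m → X) :=
  WithLp.toLp 2 (fun _ => (((Real.sqrt ((Fintype.card X : ℝ) ^ m))⁻¹ : ℝ) : ℂ))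

open Finset Real

section ProductWeights

variable {ι X : Type*} [Fintype ι] [DecidableEq ι] [Fintype X] [DecidableEq X]

lemma sum_prod_mul_two_pow_card_filter (p : ι → X → ℝ) (hp : ∀ i, ∑ v, p i v = 1)
    (s : Finset ι) (a : X) :
    ∑ x : ι → X, (∏ i, p i (x i)) * 2 ^ #{i ∈ s | x i = a} = ∏ i ∈ s, (1 + p i a) := by
  have hfactor : ∀ i, ∑ v, p i v * (if i ∈ s ∧ v = a then 2 else 1) =
      if i ∈ s then 1 + p i a else 1 := by
    intro i
    by_cases hi : i ∈ s
    · have hsplit : ∀ v, p i v * (if v = a then 2 else 1) =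
          p i v + if v = a then p i a else 0 := by
        intro v; by_cases hv : v = a <;> simp [hv]; ring
      simp only [hi, true_and, if_true, hsplit, sum_add_distrib, hp, sum_ite_eq', mem_univ]
    · simp [hi, hp]
  calc ∑ x : ι → X, (∏ i, p i (x i)) * 2 ^ #{i ∈ s | x i = a}
      = ∑ x : ι → X, ∏ i, p i (x i) * (if i ∈ s ∧ x i = a then 2 else 1) := by
        refine sum_congr rfl fun x _ => ?_
        rw [prod_mul_distrib, prod_ite, prod_const_one, mul_one, prod_const]
        congr 3
        ext i
        simp
    _ = ∏ i, ∑ v, p i v * (if i ∈ s ∧ v = a then 2 else 1) := by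
        rw [Fintype.prod_sum]
    _ = ∏ i ∈ s, (1 + p i a) := by
        rw [prod_congr rfl fun i _ => hfactor i, prod_ite_mem, univ_inter]

lemma sum_ite_lt_le_two_rpow_neg_mul {α : Type*} [Fintype α] (w : α → ℝ) (hw : ∀ x, 0 ≤ w x)
    (T : α → ℕ) (t : ℝ) :
    ∑ x, (if t < T x then w x else 0) ≤ 2 ^ (-t) * ∑ x, w x * 2 ^ T x := by
  rw [mul_sum]
  refine sum_le_sum fun x _ => ?_
  split_ifs with h
  · have hone : 1 ≤ (2 : ℝ) ^ (-t) * 2 ^ T x := by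
      rw [← rpow_natCast, ← rpow_add two_pos]
      exact one_le_rpow one_le_two (by linarith)
    nlinarith [hw x]
  · have := hw x
    positivity

lemma sum_ite_lt_card_filter_le (p : ι → X → ℝ) (hp0 : ∀ i v, 0 ≤ p i v)
    (hp1 : ∀ i, ∑ v, p i v = 1) (s : Finset ι) (a : X) {q : ℝ} (hq : ∀ i ∈ s, p i a ≤ q)
    (t : ℝ) :
    ∑ x : ι → X, (if t < #{i ∈ s | x i = a} then ∏ i, p i (x i) else 0) ≤
      2 ^ (-t) * exp (#s * q) := by
  calc ∑ x : ι → X, (if t < #{i ∈ s | x i = a} then ∏ i, p i (x i) else 0)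
      ≤ 2 ^ (-t) * ∑ x : ι → X, (∏ i, p i (x i)) * 2 ^ #{i ∈ s | x i = a} :=
        sum_ite_lt_le_two_rpow_neg_mul _ (fun x => prod_nonneg fun i _ => hp0 i (x i)) _ t
    _ = 2 ^ (-t) * ∏ i ∈ s, (1 + p i a) := by rw [sum_prod_mul_two_pow_card_filter p hp1]
    _ ≤ 2 ^ (-t) * ∏ _i ∈ s, exp q := by
        gcongr with i hi
        · exact fun i _ => by linarith [hp0 i a]
        · linarith [add_one_le_exp q, hq i hi]
    _ = 2 ^ (-t) * exp (#s * q) := by rw [prod_const, exp_nat_mul]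

end ProductWeights

section DisjointSupports

variable {𝕜 ι α : Type*} [RCLike 𝕜] [Fintype ι] {f : ι → EuclideanSpace 𝕜 α}

lemma norm_sq_sum_smul_apply_of_disjoint (hf : ∀ x, ∃ j, ∀ b ≠ j, f b x = 0) (c : ι → 𝕜)
    (x : α) : ‖(∑ b, c b • f b) x‖ ^ 2 = ∑ b, ‖c b‖ ^ 2 * ‖f b x‖ ^ 2 := by
  obtain ⟨j, hj⟩ := hf x
  rw [WithLp.ofLp_sum, Finset.sum_apply, sum_eq_single j (fun b _ hb => by simp [hj b hb])
    (by simp), sum_eq_single j (fun b _ hb => by simp [hj b hb]) (by simp)]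
  simp [norm_mul, mul_pow]

lemma sum_norm_sq_apply_le_of_disjoint [Fintype α] (hf : ∀ x, ∃ j, ∀ b ≠ j, f b x = 0)
    (hf1 : ∀ b, ‖f b‖ = 1) (t : Finset α) {ε : ℝ} (ht : ∀ b, ∑ x ∈ t, ‖f b x‖ ^ 2 ≤ ε)
    {φ : EuclideanSpace 𝕜 α} (hφ : φ ∈ Submodule.span 𝕜 (Set.range f)) :
    ∑ x ∈ t, ‖φ x‖ ^ 2 ≤ ε * ‖φ‖ ^ 2 := by
  obtain ⟨c, rfl⟩ := (Submodule.mem_span_range_iff_exists_fun 𝕜).1 hφ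
  have hsum : ∀ t : Finset α, ∑ x ∈ t, ‖(∑ b, c b • f b) x‖ ^ 2 =
      ∑ b, ‖c b‖ ^ 2 * ∑ x ∈ t, ‖f b x‖ ^ 2 := by
    intro t
    simp only [norm_sq_sum_smul_apply_of_disjoint hf, mul_sum]
    exact sum_comm
  have hnorm : ‖∑ b, c b • f b‖ ^ 2 = ∑ b, ‖c b‖ ^ 2 := by
    simp only [EuclideanSpace.norm_sq_eq, hsum]
    simp [← EuclideanSpace.norm_sq_eq, hf1]
  rw [hsum, hnorm, mul_sum]
  exact sum_le_sum fun b _ => by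
    rw [mul_comm ε]; exact mul_le_mul_of_nonneg_left (ht b) (by positivity)

end DisjointSupports

lemma norm_map_sub_map_le_two_mul {R E F : Type*} [Semiring R] [SeminormedAddCommGroup E]
    [SeminormedAddCommGroup F] [Module R E] [Module R F] (C C' : E ≃ₗᵢ[R] F) {φ ψ : E}
    (h : C (φ - ψ) = C' (φ - ψ)) : ‖C φ - C' φ‖ ≤ 2 * ‖ψ‖ := by
  have hdiff : C φ - C' φ = C ψ - C' ψ := by
    rw [map_sub, map_sub] at h
    rw [sub_eq_sub_iff_sub_eq_sub, h]
  calc ‖C φ - C' φ‖ = ‖C ψ - C' ψ‖ := by rw [hdiff]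
    _ ≤ ‖C ψ‖ + ‖C' ψ‖ := norm_sub_le _ _
    _ = 2 * ‖ψ‖ := by rw [C.norm_map, C'.norm_map]; ring

lemma norm_iterate_sub_iterate_le {E : Type*} [SeminormedAddCommGroup E] {F G : E → E}
    {S : Set E} (hF : Set.MapsTo F S S) (hG : LipschitzWith 1 G) {δ : ℝ}
    (hδ : ∀ v ∈ S, ‖F v - G v‖ ≤ δ) {v : E} (hv : v ∈ S) (k : ℕ) :
    ‖F^[k] v - G^[k] v‖ ≤ k * δ := by
  induction k with
  | zero => simp
  | succ k ih =>
    rw [Function.iterate_succ_apply', Function.iterate_succ_apply']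
    calc ‖F (F^[k] v) - G (G^[k] v)‖
        ≤ ‖F (F^[k] v) - G (F^[k] v)‖ + ‖G (F^[k] v) - G (G^[k] v)‖ :=
          norm_sub_le_norm_sub_add_norm_sub _ _ _
      _ ≤ δ + ‖F^[k] v - G^[k] v‖ := by
          gcongr
          · exact hδ _ (hF.iterate k hv)
          · simpa using hG.norm_sub_le (F^[k] v) (G^[k] v)
      _ ≤ (k + 1 : ℕ) * δ := by push_cast; linarith

lemma sqrt_mul_exp_neg_div_le_inv_pow_three {m n : ℝ} (hm : 2 ≤ m) (hn : 0 ≤ n)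
    (h : n < m / (36 * log m)) : √n * exp (-m / (9 * n)) ≤ (m ^ 3)⁻¹ := by
  rcases hn.eq_or_lt with rfl | hn
  · rw [sqrt_zero, zero_mul]; positivity
  have hlog : log 2 ≤ log m := log_le_log (by norm_num) hm
  have h36 : 1 ≤ 36 * log m := by nlinarith [log_two_gt_d9]
  have hnm : n ≤ m := h.le.trans (div_le_self (by linarith) h36)
  have hexp : exp (-m / (9 * n)) ≤ (m ^ 4)⁻¹ := by
    have h' : n * (36 * log m) < m := (lt_div_iff₀ (by positivity)).1 h
    calc exp (-m / (9 * n)) ≤ exp (-(4 * log m)) := by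
          rw [exp_le_exp, neg_div, neg_le_neg_iff, le_div_iff₀ (by positivity)]
          linarith
      _ = (m ^ 4)⁻¹ := by
          rw [exp_neg, show 4 * log m = log (m ^ 4) by rw [log_pow]; norm_num,
            exp_log (by positivity)]
  have hsqrt : √n ≤ m := by
    rw [sqrt_le_left (by linarith)]
    nlinarith
  calc √n * exp (-m / (9 * n)) ≤ m * (m ^ 4)⁻¹ := by gcongr
    _ = (m ^ 3)⁻¹ := by field_simp

section PsiStates

noncomputable def uniformWeight {X : Type*} [DecidableEq X] (S : Finset X) (v : X) : ℝ :=
  if v ∈ S then (#S : ℝ)⁻¹ else 0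

lemma uniformWeight_nonneg {X : Type*} [DecidableEq X] (S : Finset X) (v : X) :
    0 ≤ uniformWeight S v := by
  unfold uniformWeight; split_ifs <;> positivity

variable {X : Type*} [Fintype X] [DecidableEq X] {m : ℕ} {A1 : Fin m → Finset X}

lemma sum_uniformWeight {S : Finset X} (hS : S.Nonempty) : ∑ v, uniformWeight S v = 1 := by
  simp [uniformWeight, sum_ite_mem, hS.card_pos.ne']

lemma uniformWeight_compl_le {A : Finset X} (hA : A.Nonempty)
    (hhalf : 2 * #A ≤ Fintype.card X) (v : X) : uniformWeight Aᶜ v ≤ 2 / Fintype.card X := by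
  have hcompl : Fintype.card X ≤ 2 * #Aᶜ := by rw [card_compl]; omega
  have hpos : 0 < #Aᶜ := by rw [card_compl]; have := hA.card_pos; omega
  have hn : 0 < Fintype.card X := by have := hA.card_pos; omega
  unfold uniformWeight
  split_ifs
  · rw [inv_eq_one_div, div_le_div_iff₀ (by exact_mod_cast hpos) (by exact_mod_cast hn)]
    exact_mod_cast (by omega : 1 * Fintype.card X ≤ 2 * #Aᶜ)
  · positivity

lemma mem_Aset_iff (A : Finset X) (c : Bool) (v : X) : v ∈ Aset A c ↔ c = decide (v ∈ A) := by
  cases c <;> simp [Aset]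

lemma Aset_nonempty {A : Finset X} (hA : A.Nonempty) (hhalf : 2 * #A ≤ Fintype.card X)
    (c : Bool) : (Aset A c).Nonempty := by
  cases c
  · rw [Aset, ← card_pos, card_compl]; have := hA.card_pos; omega
  · exact hA

noncomputable def psiWeight (A1 : Fin m → Finset X) (b : Fin m → Bool) (x : Fin m → X) : ℝ :=
  ∏ i, uniformWeight (Aset (A1 i) (b i)) (x i)

lemma psiWeight_nonneg (b : Fin m → Bool) (x : Fin m → X) : 0 ≤ psiWeight A1 b x :=
  prod_nonneg fun _ _ => uniformWeight_nonneg _ _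

lemma norm_sq_psiState_apply (b : Fin m → Bool) (x : Fin m → X) :
    ‖psiState A1 b x‖ ^ 2 = psiWeight A1 b x := by
  simp only [psiState, psiWeight, PiLp.toLp_apply, norm_prod, ← prod_pow]
  refine prod_congr rfl fun i _ => ?_
  unfold uniformWeight
  split_ifs <;> simp [sq_sqrt]

lemma psiState_apply_eq_zero {b : Fin m → Bool} {x : Fin m → X} {i : Fin m}
    (hi : x i ∉ Aset (A1 i) (b i)) : psiState A1 b x = 0 :=
  prod_eq_zero (mem_univ i) (if_neg hi)

lemma exists_forall_ne_psiState_apply_eq_zero (x : Fin m → X) :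
    ∃ j, ∀ b ≠ j, psiState A1 b x = 0 := by
  refine ⟨fun i => decide (x i ∈ A1 i), fun b hb => ?_⟩
  obtain ⟨i, hi⟩ := Function.ne_iff.1 hb
  exact psiState_apply_eq_zero (i := i) (by rwa [mem_Aset_iff])

lemma norm_psiState (hne : ∀ i, (A1 i).Nonempty)
    (hhalf : ∀ i, 2 * #(A1 i) ≤ Fintype.card X) (b : Fin m → Bool) : ‖psiState A1 b‖ = 1 := by
  have hsq : ‖psiState A1 b‖ ^ 2 = 1 := by
    rw [EuclideanSpace.norm_sq_eq]
    simp only [norm_sq_psiState_apply, psiWeight]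
    rw [← Fintype.prod_sum]
    exact prod_eq_one fun i _ => sum_uniformWeight (Aset_nonempty (hne i) (hhalf i) (b i))
  rwa [pow_eq_one_iff_of_nonneg (norm_nonneg _) two_ne_zero] at hsq

end PsiStates

section Tail

variable {X : Type*} [Fintype X] [DecidableEq X] {m : ℕ} {A1 : Fin m → Finset X} {β : ℝ}

lemma exists_lt_card_filter_of_notMem_Upsilon (hne : ∀ i, (A1 i).Nonempty)
    (hsub : ∀ x : Fin m → X, (∀ i, x i ∈ A1 i) → x ∈ Upsilon m X (β / 2))
    {b : Fin m → Bool} {x : Fin m → X} (hx : ∀ i, x i ∈ Aset (A1 i) (b i))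
    (hxβ : x ∉ Upsilon m X β) :
    ∃ a, β / 2 < #{i | b i = false ∧ x i = a} := by
  obtain ⟨a, ha⟩ : ∃ a, β < #{i | x i = a} := by simpa [Upsilon] using hxβ
  let y : Fin m → X := fun i => if b i then x i else (hne i).choose
  have hy : ∀ i, y i ∈ A1 i := by
    intro i
    by_cases hb : b i
    · simpa [y, hb, Aset] using hx i
    · simpa [y, hb] using (hne i).choose_spec
  have htrue : (#{i ∈ ({i | x i = a} : Finset (Fin m)) | ¬b i = false} : ℝ) ≤ β / 2 := by
    refine le_trans ?_ (hsub y hy a)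
    gcongr
    intro i
    simp only [mem_filter, mem_univ, true_and, Bool.not_eq_false, and_imp]
    intro hxa hb
    simp [y, hb, hxa]
  have hsplit := card_filter_add_card_filter_not (s := ({i | x i = a} : Finset (Fin m)))
    (fun i => b i = false)
  refine ⟨a, ?_⟩
  rw [show #{i | b i = false ∧ x i = a} =
      #{i ∈ ({i | x i = a} : Finset (Fin m)) | b i = false} by
    rw [filter_filter]; simp_rw [and_comm]]
  have : (#{i ∈ ({i | x i = a} : Finset (Fin m)) | b i = false} : ℝ) +
      #{i ∈ ({i | x i = a} : Finset (Fin m)) | ¬b i = false} = #{i | x i = a} := by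
    exact_mod_cast hsplit
  linarith

lemma norm_sq_psiState_apply_le_sum (hne : ∀ i, (A1 i).Nonempty)
    (hsub : ∀ x : Fin m → X, (∀ i, x i ∈ A1 i) → x ∈ Upsilon m X (β / 2))
    (b : Fin m → Bool) {x : Fin m → X} (hxβ : x ∉ Upsilon m X β) :
    ‖psiState A1 b x‖ ^ 2 ≤ ∑ a, if β / 2 < #{i | b i = false ∧ x i = a}
      then psiWeight A1 b x else 0 := by
  have hterm : ∀ a, 0 ≤ if β / 2 < #{i | b i = false ∧ x i = a}
      then psiWeight A1 b x else 0 := fun a => by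
    split_ifs
    · exact psiWeight_nonneg b x
    · exact le_rfl
  by_cases hx : ∀ i, x i ∈ Aset (A1 i) (b i)
  · obtain ⟨a, ha⟩ := exists_lt_card_filter_of_notMem_Upsilon hne hsub hx hxβ
    rw [norm_sq_psiState_apply]
    exact (if_pos ha).symm.le.trans (single_le_sum (fun a _ => hterm a) (mem_univ a))
  · obtain ⟨i, hi⟩ := not_forall.1 hx
    rw [psiState_apply_eq_zero hi, norm_zero, sq, zero_mul]
    exact sum_nonneg fun a _ => hterm a

lemma two_rpow_neg_mul_exp_le {k n : ℝ} (hn : 0 < n) (hk : k ≤ m) (hβ : 8 * m / n < β) :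
    (2 : ℝ) ^ (-(β / 2)) * exp (k * (2 / n)) ≤ exp (-(2 * m) / (9 * n)) := by
  rw [rpow_def_of_pos two_pos, ← exp_add, exp_le_exp]
  have hβn : 8 * m < β * n := (div_lt_iff₀ hn).1 hβ
  have hlog : 0.6931471803 < log 2 := log_two_gt_d9
  have hm : (0 : ℝ) ≤ m := m.cast_nonneg
  rw [← mul_le_mul_iff_of_pos_right hn]
  field_simp
  nlinarith

lemma sum_ite_lt_card_filter_le_exp (hne : ∀ i, (A1 i).Nonempty)
    (hhalf : ∀ i, 2 * #(A1 i) ≤ Fintype.card X) (hβ : 8 * m / (Fintype.card X : ℝ) < β)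
    (b : Fin m → Bool) (a : X) :
    ∑ x : Fin m → X, (if β / 2 < #{i | b i = false ∧ x i = a}
      then psiWeight A1 b x else 0) ≤
      exp (-(2 * m) / (9 * Fintype.card X)) := by
  have hn : (0 : ℝ) < Fintype.card X := by exact_mod_cast Fintype.card_pos_iff.2 ⟨a⟩
  have hcount : ∀ x : Fin m → X, #{i | b i = false ∧ x i = a} =
      #{i ∈ ({i | b i = false} : Finset (Fin m)) | x i = a} := fun x => by rw [filter_filter]
  simp only [hcount]
  calc _ ≤ (2 : ℝ) ^ (-(β / 2)) * exp (#({i | b i = false} : Finset (Fin m)) *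
        (2 / Fintype.card X)) := by
        refine sum_ite_lt_card_filter_le _ (fun _ _ => uniformWeight_nonneg _ _)
          (fun i => sum_uniformWeight (Aset_nonempty (hne i) (hhalf i) (b i))) _ a
          (fun i hi => ?_) _
        rw [(mem_filter.1 hi).2]
        exact uniformWeight_compl_le (hne i) (hhalf i) a
    _ ≤ exp (-(2 * m) / (9 * Fintype.card X)) :=
        two_rpow_neg_mul_exp_le hn
          (by exact_mod_cast (card_le_univ _).trans_eq (Fintype.card_fin m)) hβ

lemma sum_norm_sq_psiState_apply_notMem_Upsilon_le (hne : ∀ i, (A1 i).Nonempty)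
    (hhalf : ∀ i, 2 * #(A1 i) ≤ Fintype.card X) (hβ : 8 * m / (Fintype.card X : ℝ) < β)
    (hsub : ∀ x : Fin m → X, (∀ i, x i ∈ A1 i) → x ∈ Upsilon m X (β / 2))
    (b : Fin m → Bool) :
    ∑ x ∈ {x | x ∉ Upsilon m X β}, ‖psiState A1 b x‖ ^ 2 ≤
      Fintype.card X * exp (-(2 * m) / (9 * Fintype.card X)) := by
  calc ∑ x ∈ {x | x ∉ Upsilon m X β}, ‖psiState A1 b x‖ ^ 2
      ≤ ∑ x ∈ {x | x ∉ Upsilon m X β}, ∑ a,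
          if β / 2 < #{i | b i = false ∧ x i = a}
          then psiWeight A1 b x else 0 :=
        sum_le_sum fun x hx => norm_sq_psiState_apply_le_sum hne hsub b (mem_filter.1 hx).2
    _ ≤ ∑ x, ∑ a, if β / 2 < #{i | b i = false ∧ x i = a}
          then psiWeight A1 b x else 0 := by
        refine sum_le_sum_of_subset_of_nonneg (subset_univ _) fun x _ _ => ?_
        refine sum_nonneg fun a _ => ?_
        split_ifs
        · exact psiWeight_nonneg b x
        · exact le_rfl
    _ = ∑ a, ∑ x, if β / 2 < #{i | b i = false ∧ x i = a}
          then psiWeight A1 b x else 0 := by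
        rw [sum_comm]
    _ ≤ ∑ _a : X, exp (-(2 * m) / (9 * Fintype.card X)) :=
        sum_le_sum fun a _ => sum_ite_lt_card_filter_le_exp hne hhalf hβ b a
    _ = Fintype.card X * exp (-(2 * m) / (9 * Fintype.card X)) := by
        rw [sum_const, card_univ, nsmul_eq_mul]

lemma norm_map_sub_map_le_of_mem_span (hne : ∀ i, (A1 i).Nonempty)
    (hhalf : ∀ i, 2 * #(A1 i) ≤ Fintype.card X) (hβ : 8 * m / (Fintype.card X : ℝ) < β)
    (hsub : ∀ x : Fin m → X, (∀ i, x i ∈ A1 i) → x ∈ Upsilon m X (β / 2))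
    (C C' : EuclideanSpace ℂ (Fin m → X) ≃ₗᵢ[ℂ] EuclideanSpace ℂ (Fin m → X))
    (hagree : ∀ φ : EuclideanSpace ℂ (Fin m → X),
      (∀ x, x ∉ Upsilon m X β → φ x = 0) → C φ = C' φ)
    {φ : EuclideanSpace ℂ (Fin m → X)}
    (hφ : φ ∈ Submodule.span ℂ (Set.range (psiState A1))) :
    ‖C φ - C' φ‖ ≤
      2 * (√(Fintype.card X) * exp (-m / (9 * Fintype.card X))) * ‖φ‖ := by
  set n : ℝ := ((Fintype.card X : ℕ) : ℝ)
  let φout : EuclideanSpace ℂ (Fin m → X) :=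
    WithLp.toLp 2 fun x => if x ∈ Upsilon m X β then 0 else φ x
  have hout : ‖φout‖ ^ 2 ≤ (√n * exp (-m / (9 * n)) * ‖φ‖) ^ 2 := by
    have hsq : (√n * exp (-m / (9 * n))) ^ 2 = n * exp (-(2 * m) / (9 * n)) := by
      rw [mul_pow, sq_sqrt (by positivity), ← exp_nat_mul]
      ring_nf
    rw [EuclideanSpace.norm_sq_eq, mul_pow, hsq]
    calc ∑ x, ‖φout x‖ ^ 2 = ∑ x ∈ {x | x ∉ Upsilon m X β}, ‖φ x‖ ^ 2 := by
          rw [sum_filter]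
          refine sum_congr rfl fun x _ => ?_
          by_cases hx : x ∈ Upsilon m X β <;> simp [φout, hx]
      _ ≤ _ := sum_norm_sq_apply_le_of_disjoint exists_forall_ne_psiState_apply_eq_zero
          (norm_psiState hne hhalf) _
          (sum_norm_sq_psiState_apply_notMem_Upsilon_le hne hhalf hβ hsub) hφ
  calc ‖C φ - C' φ‖ ≤ 2 * ‖φout‖ :=
        norm_map_sub_map_le_two_mul C C' (hagree _ fun x hx => by simp [φout, hx])
    _ ≤ 2 * (√n * exp (-m / (9 * n)) * ‖φ‖) := by
        gcongr
        exact (pow_le_pow_iff_left₀ (norm_nonneg _) (by positivity) two_ne_zero).1 hout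
    _ = _ := by ring

end Tail

lemma norm_Phi0 {X : Type*} [Fintype X] [Nonempty X] {m : ℕ} : ‖Phi0 X m‖ = 1 := by
  have hsq : ‖Phi0 X m‖ ^ 2 = 1 := by
    rw [EuclideanSpace.norm_sq_eq]
    simp [Phi0, sq_sqrt]
  rwa [pow_eq_one_iff_of_nonneg (norm_nonneg _) two_ne_zero] at hsq

theorem stmt8 {X : Type*} [Fintype X] [DecidableEq X] {m : ℕ} (hm : 2 ≤ m)
    (A1 : Fin m → Finset X) (hne : ∀ i, (A1 i).Nonempty)
    (hhalf : ∀ i, 2 * (A1 i).card ≤ Fintype.card X)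
    (β : ℝ) (hβ : 8 * m / (Fintype.card X : ℝ) < β)
    (hsub : ∀ x : Fin m → X, (∀ i, x i ∈ A1 i) → x ∈ Upsilon m X (β / 2))
    (hXm : (Fintype.card X : ℝ) < m / (36 * Real.log m))
    (C C' U : EuclideanSpace ℂ (Fin m → X) ≃ₗᵢ[ℂ] EuclideanSpace ℂ (Fin m → X))
    (hagree : ∀ φ : EuclideanSpace ℂ (Fin m → X),
      (∀ x, x ∉ Upsilon m X β → φ x = 0) → C φ = C' φ)
    (hH : ∀ φ ∈ Submodule.span ℂ (Set.range (psiState A1)),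
      U (C φ) ∈ Submodule.span ℂ (Set.range (psiState A1)))
    (hΦ0 : Phi0 X m ∈ Submodule.span ℂ (Set.range (psiState A1))) :
    ∀ k : ℕ,
      ‖(fun φ => U (C φ))^[k] (Phi0 X m) - (fun φ => U (C' φ))^[k] (Phi0 X m)‖ ≤
          2 * k * Real.sqrt (Fintype.card X) * Real.exp (-m / (9 * Fintype.card X)) ∧
        2 * k * Real.sqrt (Fintype.card X) * Real.exp (-m / (9 * Fintype.card X)) ≤
          2 * k / m ^ 3 := by
  intro k
  have : Nonempty X := ⟨(hne ⟨0, by omega⟩).choose⟩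
  set ε := √(Fintype.card X) * exp (-m / (9 * Fintype.card X))
  let S := {φ | φ ∈ Submodule.span ℂ (Set.range (psiState A1)) ∧ ‖φ‖ = 1}
  have hmaps : Set.MapsTo (fun φ => U (C φ)) S S := fun φ hφ =>
    ⟨hH φ hφ.1, by simpa using hφ.2⟩
  have hstep : ∀ φ ∈ S, ‖U (C φ) - U (C' φ)‖ ≤ 2 * ε := fun φ hφ => by
    rw [← map_sub, U.norm_map]
    simpa [hφ.2] using norm_map_sub_map_le_of_mem_span hne hhalf hβ hsub C C' hagree hφ.1
  have hlip : LipschitzWith 1 fun φ => U (C' φ) := by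
    simpa [Function.comp_def] using U.lipschitz.comp C'.lipschitz
  have hiter := norm_iterate_sub_iterate_le hmaps hlip hstep ⟨hΦ0, norm_Phi0⟩ k
  have hε : ε ≤ ((m : ℝ) ^ 3)⁻¹ :=
    sqrt_mul_exp_neg_div_le_inv_pow_three (by exact_mod_cast hm) (by positivity) hXm
  constructor
  · linarith
  · calc 2 * k * √(Fintype.card X) * exp (-m / (9 * Fintype.card X)) = 2 * k * ε := by ring
      _ ≤ 2 * k * ((m : ℝ) ^ 3)⁻¹ := by gcongr
      _ = 2 * k / m ^ 3 := by rw [div_eq_mul_inv]
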